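/- Counter-model extraction from stable sequents (single-agent case): let m = 1, n ∈ ℕ, and let Λ be a stable forestlike labelled sequent. Define M = (W, R_1, V) by W = Lab(Λ) (the set of labels occurring in Λ), R_1 uv iff v is 1-reachable from u in Λ, and u ∈ V(p) iff u:p̄ ∈ Λ. Then M is a finite Ldm_n^1-model, and for every labelled formula u:ψ ∈ Λ we have M, u ⊮ ψ; consequently Λ is not a valid sequent. -/

import Mathlib

namespace Stit

/-- Formulas of the language `L^m` (negation normal form), with agents `Fin m`
and propositional variables indexed by `ℕ`. -/
inductive Fml (m : ℕ) : Type
  | pos : ℕ → Fml m                  -- p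
  | neg : ℕ → Fml m                  -- p̄
  | and : Fml m → Fml m → Fml m      -- φ ∧ ψ
  | or  : Fml m → Fml m → Fml m      -- φ ∨ ψ
  | box : Fml m → Fml m              -- □φ
  | dia : Fml m → Fml m              -- ◇φ
  | ag  : Fin m → Fml m → Fml m      -- [i]φ
  | dag : Fin m → Fml m → Fml m      -- ⟨i⟩φ

namespace Fml

/-- Negation `φ̄`: replace every connective/modality by its dual and swap `p` with `p̄`. -/
def negF {m : ℕ} : Fml m → Fml m
  | pos p => neg p
  | neg p => pos p
  | and φ ψ => or φ.negF ψ.negF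
  | or φ ψ => and φ.negF ψ.negF
  | box φ => dia φ.negF
  | dia φ => box φ.negF
  | ag i φ => dag i φ.negF
  | dag i φ => ag i φ.negF

/-- `φ → ψ` abbreviates `φ̄ ∨ ψ`. -/
def impF {m : ℕ} (φ ψ : Fml m) : Fml m := or φ.negF ψ

end Fml

/-- `f 0 ∧ f 1 ∧ ⋯ ∧ f k` (left-associated). -/
def conjUpTo {m : ℕ} (f : ℕ → Fml m) : ℕ → Fml m
  | 0 => f 0
  | k+1 => Fml.and (conjUpTo f k) (f (k+1))

/-- `f 0 ∨ f 1 ∨ ⋯ ∨ f k` (left-associated). -/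
def disjUpTo {m : ℕ} (f : ℕ → Fml m) : ℕ → Fml m
  | 0 => f 0
  | k+1 => Fml.or (disjUpTo f k) (f (k+1))

/-- `(f 0)̄ ∧ ((f 1)̄ ∧ ⋯ ((f (j-1))̄ ∧ base))`. -/
def prefNegConj {m : ℕ} (f : ℕ → Fml m) : ℕ → Fml m → Fml m
  | 0, base => base
  | j+1, base => prefNegConj f j (Fml.and (f j).negF base)

/-- The antecedent `◇[i]φ_0 ∧ ◇(φ̄_0 ∧ [i]φ_1) ∧ ⋯ ∧ ◇(φ̄_0 ∧ ⋯ ∧ φ̄_{n'-1} ∧ [i]φ_{n'})`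
of the (n'+1)-choice axiom. -/
def apcAnte {m : ℕ} (i : Fin m) (f : ℕ → Fml m) (n' : ℕ) : Fml m :=
  conjUpTo (fun j => Fml.dia (prefNegConj f j (Fml.ag i (f j)))) n'

/-- The n-choice axiom `APC_n^i` for `n = n' + 1` choices `φ_0, …, φ_{n'}`. -/
def apcAx {m : ℕ} (i : Fin m) (f : ℕ → Fml m) (n' : ℕ) : Fml m :=
  (apcAnte i f n').impF (disjUpTo f n')

def diaAgIdx {m : ℕ} (f : Fin m → Fml m) (j : ℕ) : Fml m :=
  if h : j < m then Fml.dia (Fml.ag ⟨j, h⟩ (f ⟨j, h⟩)) else Fml.pos 0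

def agIdx {m : ℕ} (f : Fin m → Fml m) (j : ℕ) : Fml m :=
  if h : j < m then Fml.ag ⟨j, h⟩ (f ⟨j, h⟩) else Fml.pos 0

/-- The independence-of-agents axiom `⋀_{i∈Ag} ◇[i]φ_i → ◇(⋀_{i∈Ag} [i]φ_i)`
(for `m ≥ 1` agents). -/
def ioaAx {m : ℕ} (f : Fin m → Fml m) : Fml m :=
  (conjUpTo (diaAgIdx f) (m-1)).impF (Fml.dia (conjUpTo (agIdx f) (m-1)))

/-- An `Ldm_n^m`-model on the carrier `W`: each `rel i` is an equivalence relation (C1),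
independence of agents (C2), the `n`-choice condition when `n > 0` (C3), plus a valuation. -/
structure ModelOn (n m : ℕ) (W : Type) : Type where
  nonemp : Nonempty W
  rel : Fin m → W → W → Prop
  refl : ∀ i w, rel i w w
  symm : ∀ i w u, rel i w u → rel i u w
  trans : ∀ i w u v, rel i w u → rel i u v → rel i w v
  ioa : ∀ u : Fin m → W, ∃ v, ∀ i, rel i (u i) v
  apc : 0 < n → ∀ (i : Fin m) (w : Fin (n+1) → W),
      ∃ k j : Fin (n+1), k < j ∧ rel i (w k) (w j)
  val : ℕ → Set W

/-- Satisfaction `M, w ⊩ φ`. -/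
def Sat {n m : ℕ} {W : Type} (M : ModelOn n m W) : W → Fml m → Prop
  | w, .pos p => w ∈ M.val p
  | w, .neg p => w ∉ M.val p
  | w, .and φ ψ => Sat M w φ ∧ Sat M w ψ
  | w, .or φ ψ => Sat M w φ ∨ Sat M w ψ
  | _, .box φ => ∀ u, Sat M u φ
  | _, .dia φ => ∃ u, Sat M u φ
  | w, .ag i φ => ∀ u, M.rel i w u → Sat M u φ
  | w, .dag i φ => ∃ u, M.rel i w u ∧ Sat M u φ

/-- Validity: `⊩ φ`. -/
def Valid (n m : ℕ) (φ : Fml m) : Prop :=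
  ∀ (W : Type) (M : ModelOn n m W) (w : W), Sat M w φ

/-- Semantic consequence `Γ ⊩ φ`. -/
def SemConseq (n m : ℕ) (Γ : Set (Fml m)) (φ : Fml m) : Prop :=
  ∀ (W : Type) (M : ModelOn n m W) (w : W), (∀ ψ ∈ Γ, Sat M w ψ) → Sat M w φ

/-- The Hilbert calculus `Ldm_n^m`: classical propositional logic, S5 for `□` and each
`[i]`, the bridge axiom, IOA, the n-choice axioms (for `n > 0`), with modus ponens and
necessitation (applied to theorems). `Hderiv n m Γ φ` is `Γ ⊢_{Ldm_n^m} φ`. -/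
inductive Hderiv (n m : ℕ) : Set (Fml m) → Fml m → Prop
  | prem {Γ} {φ} (h : φ ∈ Γ) : Hderiv n m Γ φ
  | ax1 {Γ} (φ ψ : Fml m) : Hderiv n m Γ (φ.impF (ψ.impF φ))
  | ax2 {Γ} (φ ψ χ : Fml m) :
      Hderiv n m Γ ((φ.impF (ψ.impF χ)).impF ((φ.impF ψ).impF (φ.impF χ)))
  | ax3 {Γ} (φ ψ : Fml m) :
      Hderiv n m Γ ((ψ.negF.impF φ.negF).impF (φ.impF ψ))
  | boxK {Γ} (φ ψ : Fml m) :
      Hderiv n m Γ ((Fml.box (φ.impF ψ)).impF ((Fml.box φ).impF (Fml.box ψ)))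
  | boxT {Γ} (φ : Fml m) : Hderiv n m Γ ((Fml.box φ).impF φ)
  | box5 {Γ} (φ : Fml m) : Hderiv n m Γ ((Fml.dia φ).impF (Fml.box (Fml.dia φ)))
  | boxDual {Γ} (φ : Fml m) : Hderiv n m Γ (Fml.or (Fml.box φ) (Fml.dia φ.negF))
  | agK {Γ} (i : Fin m) (φ ψ : Fml m) :
      Hderiv n m Γ ((Fml.ag i (φ.impF ψ)).impF ((Fml.ag i φ).impF (Fml.ag i ψ)))
  | agT {Γ} (i : Fin m) (φ : Fml m) : Hderiv n m Γ ((Fml.ag i φ).impF φ)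
  | ag5 {Γ} (i : Fin m) (φ : Fml m) :
      Hderiv n m Γ ((Fml.dag i φ).impF (Fml.ag i (Fml.dag i φ)))
  | agDual {Γ} (i : Fin m) (φ : Fml m) :
      Hderiv n m Γ (Fml.or (Fml.ag i φ) (Fml.dag i φ.negF))
  | bridge {Γ} (i : Fin m) (φ : Fml m) :
      Hderiv n m Γ ((Fml.box φ).impF (Fml.ag i φ))
  | ioa {Γ} (f : Fin m → Fml m) : Hderiv n m Γ (ioaAx f)
  | apc {Γ} (hn : 0 < n) (i : Fin m) (f : ℕ → Fml m) :
      Hderiv n m Γ (apcAx i f (n-1))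
  | mp {Γ} {φ ψ} : Hderiv n m Γ (φ.impF ψ) → Hderiv n m Γ φ → Hderiv n m Γ ψ
  | nec {Γ} {φ} : Hderiv n m ∅ φ → Hderiv n m Γ (Fml.box φ)

/-- A relational atom `R_i x y`. -/
abbrev RAtom (m : ℕ) : Type := Fin m × ℕ × ℕ
/-- The relational part of a labelled sequent: a multiset of relational atoms. -/
abbrev RAtoms (m : ℕ) : Type := Multiset (RAtom m)
/-- A labelled formula `x : φ`. -/
abbrev LFml (m : ℕ) : Type := ℕ × Fml m
/-- The formula part of a labelled sequent: a multiset of labelled formulas. -/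
abbrev LFmls (m : ℕ) : Type := Multiset (LFml m)

/-- The label `v` does not occur in the labelled sequent `R, Γ` (eigenvariable condition). -/
def freshIn {m : ℕ} (v : ℕ) (R : RAtoms m) (Γ : LFmls m) : Prop :=
  (∀ a ∈ R, a.2.1 ≠ v ∧ a.2.2 ≠ v) ∧ ∀ e ∈ Γ, e.1 ≠ v

/-- `Reach R i w u`: `u` is `i`-reachable from `w`, i.e. there is a (possibly empty)
path of `R_i`-atoms of `R` (traversed in either direction) connecting `w` to `u`. -/
inductive Reach {m : ℕ} (R : RAtoms m) (i : Fin m) : ℕ → ℕ → Prop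
  | refl (w : ℕ) : Reach R i w w
  | fwd {w u v : ℕ} : Reach R i w u → ((i, u, v) : RAtom m) ∈ R → Reach R i w v
  | bwd {w u v : ℕ} : Reach R i w u → ((i, v, u) : RAtom m) ∈ R → Reach R i w v

/-- The relational atoms `R_1 u_1 v, …, R_m u_m v` used by the rule (IOA). -/
def ioaAtoms {m : ℕ} (u : Fin m → ℕ) (v : ℕ) : RAtoms m :=
  Multiset.ofList ((List.finRange m).map fun i => ((i, u i, v) : RAtom m))

/-- Which optional rules are present in a labelled calculus, and whether the
`[i]`-rule keeps its principal formula in the premise. -/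
structure Flags : Type where
  refl : Bool    -- (refl_i)
  eucl : Bool    -- (eucl_i)
  diaAg : Bool   -- (⟨i⟩)
  pr : Bool      -- (Pr_i)
  ioa : Bool     -- (IOA)
  agKeep : Bool  -- premise of ([i]) keeps w:[i]φ

/-- `SeqH fl n m h R Γ`: the labelled sequent `R, Γ` has a derivation of height at most
`h` in the labelled calculus determined by `fl` (with parameters `n`, `m`). -/
inductive SeqH (fl : Flags) (n m : ℕ) : ℕ → RAtoms m → LFmls m → Prop
  | id {h : ℕ} {R : RAtoms m} {Γ : LFmls m} (w p : ℕ) :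
      SeqH fl n m h R ((w, Fml.pos p) ::ₘ (w, Fml.neg p) ::ₘ Γ)
  | andR {h R Γ} {w : ℕ} {φ ψ : Fml m} :
      SeqH fl n m h R ((w, Fml.and φ ψ) ::ₘ (w, φ) ::ₘ Γ) →
      SeqH fl n m h R ((w, Fml.and φ ψ) ::ₘ (w, ψ) ::ₘ Γ) →
      SeqH fl n m (h+1) R ((w, Fml.and φ ψ) ::ₘ Γ)
  | orR {h R Γ} {w : ℕ} {φ ψ : Fml m} :
      SeqH fl n m h R ((w, Fml.or φ ψ) ::ₘ (w, φ) ::ₘ (w, ψ) ::ₘ Γ) →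
      SeqH fl n m (h+1) R ((w, Fml.or φ ψ) ::ₘ Γ)
  | boxR {h R Γ} {w v : ℕ} {φ : Fml m}
      (hv : freshIn v R ((w, Fml.box φ) ::ₘ Γ)) :
      SeqH fl n m h R ((w, Fml.box φ) ::ₘ (v, φ) ::ₘ Γ) →
      SeqH fl n m (h+1) R ((w, Fml.box φ) ::ₘ Γ)
  | diaR {h R Γ} {w u : ℕ} {φ : Fml m} :
      SeqH fl n m h R ((w, Fml.dia φ) ::ₘ (u, φ) ::ₘ Γ) →
      SeqH fl n m (h+1) R ((w, Fml.dia φ) ::ₘ Γ)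
  | agR {h R Γ} {w v : ℕ} {i : Fin m} {φ : Fml m} (hfl : fl.agKeep = false)
      (hv : freshIn v R ((w, Fml.ag i φ) ::ₘ Γ)) :
      SeqH fl n m h (((i, w, v) : RAtom m) ::ₘ R) ((v, φ) ::ₘ Γ) →
      SeqH fl n m (h+1) R ((w, Fml.ag i φ) ::ₘ Γ)
  | agRKeep {h R Γ} {w v : ℕ} {i : Fin m} {φ : Fml m} (hfl : fl.agKeep = true)
      (hv : freshIn v R ((w, Fml.ag i φ) ::ₘ Γ)) :
      SeqH fl n m h (((i, w, v) : RAtom m) ::ₘ R) ((w, Fml.ag i φ) ::ₘ (v, φ) ::ₘ Γ) →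
      SeqH fl n m (h+1) R ((w, Fml.ag i φ) ::ₘ Γ)
  | dagR {h R Γ} {w u : ℕ} {i : Fin m} {φ : Fml m} (hfl : fl.diaAg = true) :
      SeqH fl n m h (((i, w, u) : RAtom m) ::ₘ R) ((w, Fml.dag i φ) ::ₘ (u, φ) ::ₘ Γ) →
      SeqH fl n m (h+1) (((i, w, u) : RAtom m) ::ₘ R) ((w, Fml.dag i φ) ::ₘ Γ)
  | reflR {h R Γ} {i : Fin m} {w : ℕ} (hfl : fl.refl = true) :
      SeqH fl n m h (((i, w, w) : RAtom m) ::ₘ R) Γ →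
      SeqH fl n m (h+1) R Γ
  | euclR {h R Γ} {i : Fin m} {w u v : ℕ} (hfl : fl.eucl = true) :
      SeqH fl n m h (((i, w, u) : RAtom m) ::ₘ ((i, w, v) : RAtom m) ::ₘ
        ((i, u, v) : RAtom m) ::ₘ R) Γ →
      SeqH fl n m (h+1) (((i, w, u) : RAtom m) ::ₘ ((i, w, v) : RAtom m) ::ₘ R) Γ
  | ioaR {h R Γ} (hfl : fl.ioa = true) (u : Fin m → ℕ) (v : ℕ) (hv : freshIn v R Γ) :
      SeqH fl n m h (ioaAtoms u v + R) Γ →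
      SeqH fl n m (h+1) R Γ
  | apcR {h R Γ} (hn : 0 < n) (i : Fin m) (w : Fin (n+1) → ℕ) :
      (∀ k j : Fin (n+1), k < j → SeqH fl n m h (((i, w k, w j) : RAtom m) ::ₘ R) Γ) →
      SeqH fl n m (h+1) R Γ
  | prR {h R Γ} {w u : ℕ} {i : Fin m} {φ : Fml m} (hfl : fl.pr = true)
      (hreach : Reach R i w u) :
      SeqH fl n m h R ((w, Fml.dag i φ) ::ₘ (u, φ) ::ₘ Γ) →
      SeqH fl n m (h+1) R ((w, Fml.dag i φ) ::ₘ Γ)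

/-- Derivability (of some height) in the labelled calculus determined by `fl`. -/
def Seq (fl : Flags) (n m : ℕ) (R : RAtoms m) (Γ : LFmls m) : Prop :=
  ∃ h, SeqH fl n m h R Γ

/-- The calculus `G3Ldm_n^m`. -/
def G3flags : Flags := ⟨true, true, true, false, true, false⟩
/-- The calculus `G3Ldm_n^m + PR`. -/
def G3PRflags : Flags := ⟨true, true, true, true, true, false⟩
/-- `G3Ldm_n^m + PR` without the rules `(refl_i)`. -/
def G3PRnoReflFlags : Flags := ⟨false, true, true, true, true, false⟩
/-- `G3Ldm_n^m + PR` without the rules `(eucl_i)`. -/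
def G3PRnoEuclFlags : Flags := ⟨true, false, true, true, true, false⟩
/-- The refined calculus `Ldm_n^m L`. -/
def LdmLflags : Flags := ⟨false, false, false, true, true, true⟩
/-- The refined single-agent calculus `Ldm_n^1 L` (no (IOA)). -/
def LdmL1flags : Flags := ⟨false, false, false, true, false, true⟩

/-- Substitution of the label `y` for the label `x`. -/
def substLab (x y v : ℕ) : ℕ := if v = x then y else v

def substR {m : ℕ} (x y : ℕ) (R : RAtoms m) : RAtoms m :=
  R.map fun a => (a.1, substLab x y a.2.1, substLab x y a.2.2)

def substF {m : ℕ} (x y : ℕ) (Γ : LFmls m) : LFmls m :=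
  Γ.map fun e => (substLab x y e.1, e.2)

/-- Height-preserving invertibility of every inference rule of the calculus given by `fl`. -/
def InvertAll (fl : Flags) (n m : ℕ) : Prop :=
  (∀ h R Γ (w : ℕ) (φ ψ : Fml m), SeqH fl n m h R ((w, Fml.and φ ψ) ::ₘ Γ) →
     SeqH fl n m h R ((w, Fml.and φ ψ) ::ₘ (w, φ) ::ₘ Γ) ∧
     SeqH fl n m h R ((w, Fml.and φ ψ) ::ₘ (w, ψ) ::ₘ Γ)) ∧
  (∀ h R Γ (w : ℕ) (φ ψ : Fml m), SeqH fl n m h R ((w, Fml.or φ ψ) ::ₘ Γ) →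
     SeqH fl n m h R ((w, Fml.or φ ψ) ::ₘ (w, φ) ::ₘ (w, ψ) ::ₘ Γ)) ∧
  (∀ h R Γ (w v : ℕ) (φ : Fml m), freshIn v R ((w, Fml.box φ) ::ₘ Γ) →
     SeqH fl n m h R ((w, Fml.box φ) ::ₘ Γ) →
     SeqH fl n m h R ((w, Fml.box φ) ::ₘ (v, φ) ::ₘ Γ)) ∧
  (∀ h R Γ (w u : ℕ) (φ : Fml m), SeqH fl n m h R ((w, Fml.dia φ) ::ₘ Γ) →
     SeqH fl n m h R ((w, Fml.dia φ) ::ₘ (u, φ) ::ₘ Γ)) ∧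
  (fl.agKeep = false → ∀ h R Γ (w v : ℕ) (i : Fin m) (φ : Fml m),
     freshIn v R ((w, Fml.ag i φ) ::ₘ Γ) →
     SeqH fl n m h R ((w, Fml.ag i φ) ::ₘ Γ) →
     SeqH fl n m h (((i, w, v) : RAtom m) ::ₘ R) ((v, φ) ::ₘ Γ)) ∧
  (fl.agKeep = true → ∀ h R Γ (w v : ℕ) (i : Fin m) (φ : Fml m),
     freshIn v R ((w, Fml.ag i φ) ::ₘ Γ) →
     SeqH fl n m h R ((w, Fml.ag i φ) ::ₘ Γ) →
     SeqH fl n m h (((i, w, v) : RAtom m) ::ₘ R) ((w, Fml.ag i φ) ::ₘ (v, φ) ::ₘ Γ)) ∧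
  (fl.diaAg = true → ∀ h R Γ (w u : ℕ) (i : Fin m) (φ : Fml m),
     SeqH fl n m h (((i, w, u) : RAtom m) ::ₘ R) ((w, Fml.dag i φ) ::ₘ Γ) →
     SeqH fl n m h (((i, w, u) : RAtom m) ::ₘ R) ((w, Fml.dag i φ) ::ₘ (u, φ) ::ₘ Γ)) ∧
  (fl.refl = true → ∀ h R Γ (i : Fin m) (w : ℕ), SeqH fl n m h R Γ →
     SeqH fl n m h (((i, w, w) : RAtom m) ::ₘ R) Γ) ∧
  (fl.eucl = true → ∀ h R Γ (i : Fin m) (w u v : ℕ),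
     SeqH fl n m h (((i, w, u) : RAtom m) ::ₘ ((i, w, v) : RAtom m) ::ₘ R) Γ →
     SeqH fl n m h (((i, w, u) : RAtom m) ::ₘ ((i, w, v) : RAtom m) ::ₘ
       ((i, u, v) : RAtom m) ::ₘ R) Γ) ∧
  (fl.ioa = true → ∀ h R Γ (u : Fin m → ℕ) (v : ℕ), freshIn v R Γ →
     SeqH fl n m h R Γ → SeqH fl n m h (ioaAtoms u v + R) Γ) ∧
  (0 < n → ∀ h R Γ (i : Fin m) (w : Fin (n+1) → ℕ) (k j : Fin (n+1)), k < j →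
     SeqH fl n m h R Γ → SeqH fl n m h (((i, w k, w j) : RAtom m) ::ₘ R) Γ) ∧
  (fl.pr = true → ∀ h R Γ (w u : ℕ) (i : Fin m) (φ : Fml m), Reach R i w u →
     SeqH fl n m h R ((w, Fml.dag i φ) ::ₘ Γ) →
     SeqH fl n m h R ((w, Fml.dag i φ) ::ₘ (u, φ) ::ₘ Γ))

/-- A labelled sequent `R, Γ` is satisfied in `M` under the interpretation `I`. -/
def SeqSat {n m : ℕ} {W : Type} (M : ModelOn n m W) (I : ℕ → W)
    (R : RAtoms m) (Γ : LFmls m) : Prop :=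
  (∀ a ∈ R, M.rel a.1 (I a.2.1) (I a.2.2)) → ∃ e ∈ Γ, Sat M (I e.1) e.2

/-- A labelled sequent is valid: satisfied in every model under every interpretation. -/
def SeqValid (n m : ℕ) (R : RAtoms m) (Γ : LFmls m) : Prop :=
  ∀ (W : Type) (M : ModelOn n m W) (I : ℕ → W), SeqSat M I R Γ

/-- The edge relation of the graph of a single-agent labelled sequent:
`(w,u)` is an edge iff `R_1 wu` occurs among the relational atoms. -/
def Edge (R : RAtoms 1) (x y : ℕ) : Prop := (((0 : Fin 1), x, y) : RAtom 1) ∈ R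

/-- A single-agent sequent is forestlike iff its graph is a disjoint union of
(rooted, directed) trees: every vertex has at most one parent and there are no
directed cycles, so that from the root of each component there is exactly one
directed path to every vertex of that component. -/
def Forestlike (R : RAtoms 1) : Prop :=
  (∀ x x' y, Edge R x y → Edge R x' y → x = x') ∧
  ∀ x, ¬ Relation.TransGen (Edge R) x x

/-- The set of labels occurring in the labelled sequent `R, Γ`. -/
def SeqLabels {m : ℕ} (R : RAtoms m) (Γ : LFmls m) : Set ℕ :=
  {x | (∃ a ∈ R, a.2.1 = x ∨ a.2.2 = x) ∨ ∃ e ∈ Γ, e.1 = x}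
/-- `R, Γ` is `n`-choice consistent: its graph contains at most `n` choice-trees,
i.e. at most `n` connected components cover all labels. -/
def NChoiceConsistent (n : ℕ) (R : RAtoms 1) (Γ : LFmls 1) : Prop :=
  ∃ reps : Finset ℕ, reps.card ≤ n ∧
    ∀ x ∈ SeqLabels R Γ, ∃ r ∈ reps, Reach R 0 r x

/-- Stability of a (forestlike) single-agent labelled sequent `R, Γ`: all labels are
saturated, `□`- and `[1]`-realized, `◇`- and `⟨1⟩`-propagated, and (for `n > 0`) the
sequent is `n`-choice consistent.  Here `CT(w)`, the choice-tree of `w`, is the set of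
labels `1`-reachable from `w`. -/
structure Stable (n : ℕ) (R : RAtoms 1) (Γ : LFmls 1) : Prop where
  satNeg : ∀ (w : ℕ) (φ : Fml 1), (w, φ) ∈ Γ → (w, φ.negF) ∉ Γ
  satOr : ∀ (w : ℕ) (φ ψ : Fml 1), (w, Fml.or φ ψ) ∈ Γ → (w, φ) ∈ Γ ∧ (w, ψ) ∈ Γ
  satAnd : ∀ (w : ℕ) (φ ψ : Fml 1), (w, Fml.and φ ψ) ∈ Γ → (w, φ) ∈ Γ ∨ (w, ψ) ∈ Γ
  boxRealized : ∀ (w : ℕ) (φ : Fml 1), (w, Fml.box φ) ∈ Γ → ∃ u, (u, φ) ∈ Γ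
  agRealized : ∀ (w : ℕ) (φ : Fml 1), (w, Fml.ag 0 φ) ∈ Γ →
    ∃ u, Reach R 0 w u ∧ (u, φ) ∈ Γ
  diaPropagated : ∀ (w : ℕ) (φ : Fml 1), (w, Fml.dia φ) ∈ Γ →
    ∀ u ∈ SeqLabels R Γ, (u, φ) ∈ Γ
  dagPropagated : ∀ (w : ℕ) (φ : Fml 1), (w, Fml.dag 0 φ) ∈ Γ →
    ∀ u, Reach R 0 w u → (u, φ) ∈ Γ
  nChoice : 0 < n → NChoiceConsistent n R Γ

/-! A truth lemma by induction on `ψ` shows that every `u : ψ ∈ Γ` is false at `u`: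
saturation settles the propositional cases, realization supplies a label falsifying the body
of `□φ` and `[1]φ`, and propagation puts the body of `◇φ` and `⟨1⟩φ` at every (reachable)
label. Reachability is an equivalence relation, and a cover of the labels by at most `n`
choice-trees gives the `n`-choice condition by pigeonhole. Interpreting every label as itself
satisfies all relational atoms, so the model refutes the sequent. -/

namespace Reach

variable {m : ℕ} {R : RAtoms m} {i : Fin m}

theorem trans {a b c : ℕ} (hab : Reach R i a b) (hbc : Reach R i b c) : Reach R i a c := by
  induction hbc with
  | refl => exact hab
  | fwd _ hm ih => exact ih.fwd hm
  | bwd _ hm ih => exact ih.bwd hm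

theorem symm {a b : ℕ} (h : Reach R i a b) : Reach R i b a := by
  induction h with
  | refl => exact refl _
  | fwd _ hm ih => exact ((refl _).bwd hm).trans ih
  | bwd _ hm ih => exact ((refl _).fwd hm).trans ih

theorem of_mem {a b : ℕ} (h : ((i, a, b) : RAtom m) ∈ R) : Reach R i a b :=
  (refl a).fwd h

end Reach

section Labels

variable {m : ℕ} {R : RAtoms m} {Γ : LFmls m}

theorem seqLabels_finite (R : RAtoms m) (Γ : LFmls m) : (SeqLabels R Γ).Finite := by
  refine ((((R.map fun a => a.2.1) + R.map fun a => a.2.2) + Γ.map Prod.fst).toFinset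
    |>.finite_toSet).subset ?_
  rintro x (⟨a, ha, rfl | rfl⟩ | ⟨e, he, rfl⟩) <;>
    simp only [Finset.mem_coe, Multiset.mem_toFinset, Multiset.mem_add]
  exacts [.inl (.inl (Multiset.mem_map_of_mem _ ha)), .inl (.inr (Multiset.mem_map_of_mem _ ha)),
    .inr (Multiset.mem_map_of_mem _ he)]

theorem fst_mem_seqLabels {a : RAtom m} (ha : a ∈ R) : a.2.1 ∈ SeqLabels R Γ :=
  Or.inl ⟨a, ha, Or.inl rfl⟩

theorem snd_mem_seqLabels {a : RAtom m} (ha : a ∈ R) : a.2.2 ∈ SeqLabels R Γ :=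
  Or.inl ⟨a, ha, Or.inr rfl⟩

theorem label_mem_seqLabels {e : LFml m} (he : e ∈ Γ) : e.1 ∈ SeqLabels R Γ :=
  Or.inr ⟨e, he, rfl⟩

theorem Reach.mem_seqLabels {i : Fin m} {w u : ℕ} (h : Reach R i w u)
    (hw : w ∈ SeqLabels R Γ) : u ∈ SeqLabels R Γ := by
  cases h with
  | refl => exact hw
  | fwd _ hm => exact snd_mem_seqLabels hm
  | bwd _ hm => exact fst_mem_seqLabels hm

end Labels

theorem exists_lt_rel_of_card_le {α : Type*} {r : α → α → Prop} (hr : Equivalence r)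
    {n : ℕ} (reps : Finset α) (hcard : reps.card ≤ n) (w : Fin (n + 1) → α)
    (hcover : ∀ k, ∃ y ∈ reps, r y (w k)) : ∃ k j : Fin (n + 1), k < j ∧ r (w k) (w j) := by
  choose rep hrep hrel using hcover
  obtain ⟨k, -, j, -, hkj, hsame⟩ := Finset.exists_ne_map_eq_of_card_lt_of_maps_to
    (s := Finset.univ) (t := reps) (by simpa using Nat.lt_succ_of_le hcard)
    (fun k _ => hrep k)
  have hkj' : r (w k) (w j) := hr.trans (hr.symm (hrel k)) (hsame ▸ hrel j)
  rcases hkj.lt_or_gt with h | h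
  · exact ⟨k, j, h, hkj'⟩
  · exact ⟨j, k, h, hr.symm hkj'⟩

section Countermodel

variable {n : ℕ} {R : RAtoms 1} {Γ : LFmls 1}

theorem Stable.exists_lt_reach (hstable : Stable n R Γ) (hn : 0 < n)
    (w : Fin (n + 1) → {x : ℕ // x ∈ SeqLabels R Γ}) :
    ∃ k j : Fin (n + 1), k < j ∧ Reach R 0 (w k).1 (w j).1 := by
  obtain ⟨reps, hcard, hcover⟩ := hstable.nChoice hn
  exact exists_lt_rel_of_card_le ⟨Reach.refl, Reach.symm, Reach.trans⟩ reps hcard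
    (Subtype.val ∘ w) fun k => hcover _ (w k).2

def countermodel (hstable : Stable n R Γ) (hne : (SeqLabels R Γ).Nonempty) :
    ModelOn n 1 {x : ℕ // x ∈ SeqLabels R Γ} where
  nonemp := ⟨⟨hne.some, hne.some_mem⟩⟩
  rel := fun _ u v => Reach R 0 u.1 v.1
  refl := fun _ _ => Reach.refl _
  symm := fun _ _ _ h => h.symm
  trans := fun _ _ _ _ => Reach.trans
  ioa := fun u => ⟨u 0, fun i => Subsingleton.elim i 0 ▸ Reach.refl _⟩
  apc := fun hn _ => hstable.exists_lt_reach hn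
  val := fun p => {u | (u.1, Fml.neg p) ∈ Γ}

variable (hstable : Stable n R Γ) (hne : (SeqLabels R Γ).Nonempty)

theorem not_sat_countermodel {ψ : Fml 1} {u : ℕ} (h : (u, ψ) ∈ Γ)
    (hu : u ∈ SeqLabels R Γ) : ¬ Sat (countermodel hstable hne) ⟨u, hu⟩ ψ := by
  induction ψ generalizing u with
  | pos p => exact hstable.satNeg u (.pos p) h
  | neg p => exact fun hs => hs h
  | and φ ψ ihφ ihψ =>
    rintro ⟨hφ, hψ⟩
    rcases hstable.satAnd u φ ψ h with h' | h'
    · exact ihφ h' hu hφ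
    · exact ihψ h' hu hψ
  | or φ ψ ihφ ihψ =>
    obtain ⟨hφ, hψ⟩ := hstable.satOr u φ ψ h
    rintro (hs | hs)
    · exact ihφ hφ hu hs
    · exact ihψ hψ hu hs
  | box φ ih =>
    intro hs
    obtain ⟨v, hv⟩ := hstable.boxRealized u φ h
    exact ih hv (label_mem_seqLabels hv) (hs _)
  | dia φ ih =>
    rintro ⟨v, hs⟩
    exact ih (hstable.diaPropagated u φ h v.1 v.2) v.2 hs
  | ag i φ ih =>
    obtain rfl := Subsingleton.elim i 0
    intro hs
    obtain ⟨v, hreach, hv⟩ := hstable.agRealized u φ h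
    exact ih hv (hreach.mem_seqLabels hu) (hs _ hreach)
  | dag i φ ih =>
    obtain rfl := Subsingleton.elim i 0
    rintro ⟨v, hreach, hs⟩
    exact ih (hstable.dagPropagated u φ h v.1 hreach) v.2 hs

open Classical in
/-- Labels outside the sequent are sent to an arbitrary label. -/
noncomputable def labelInterp (x : ℕ) : {x : ℕ // x ∈ SeqLabels R Γ} :=
  if hx : x ∈ SeqLabels R Γ then ⟨x, hx⟩ else ⟨hne.some, hne.some_mem⟩

theorem labelInterp_of_mem {x : ℕ} (hx : x ∈ SeqLabels R Γ) : labelInterp hne x = ⟨x, hx⟩ :=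
  dif_pos hx

theorem not_seqSat_countermodel :
    ¬ SeqSat (countermodel hstable hne) (labelInterp hne) R Γ := by
  intro hsat
  obtain ⟨⟨u, ψ⟩, he, hs⟩ := hsat fun ⟨i, x, y⟩ ha => by
    rw [labelInterp_of_mem hne (fst_mem_seqLabels ha),
      labelInterp_of_mem hne (snd_mem_seqLabels ha)]
    exact Reach.of_mem (Subsingleton.elim i 0 ▸ ha)
  rw [labelInterp_of_mem hne (label_mem_seqLabels he)] at hs
  exact not_sat_countermodel hstable hne he _ hs

end Countermodel

theorem countermodel_extraction_general (n : ℕ) (R : RAtoms 1) (Γ : LFmls 1)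
    (hstable : Stable n R Γ)
    (hne : (SeqLabels R Γ).Nonempty) :
    Finite {x : ℕ // x ∈ SeqLabels R Γ} ∧
    ∃ M : ModelOn n 1 {x : ℕ // x ∈ SeqLabels R Γ},
      M.rel = (fun _ u v => Reach R 0 u.1 v.1) ∧
      M.val = (fun p => {u : {x : ℕ // x ∈ SeqLabels R Γ} | (u.1, Fml.neg p) ∈ Γ}) ∧
      (∀ e ∈ Γ, ∀ hx : e.1 ∈ SeqLabels R Γ, ¬ Sat M ⟨e.1, hx⟩ e.2) ∧
      ¬ SeqValid n 1 R Γ :=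
  ⟨(seqLabels_finite R Γ).to_subtype, countermodel hstable hne, rfl, rfl,
    fun _ he hx => not_sat_countermodel hstable hne he hx,
    fun hvalid => not_seqSat_countermodel hstable hne (hvalid _ _ _)⟩

/-- Counter-model extraction (single agent): from a stable forestlike
labelled sequent `Λ = R, Γ` (containing at least one label) one obtains a finite
`Ldm_n^1`-model `M` on the labels of `Λ`, whose relation `R_1` is `1`-reachability
in `Λ` and whose valuation is given by `u ∈ V(p)` iff `u:p̄ ∈ Λ`, such that every
labelled formula `u:ψ ∈ Λ` is falsified at `u`; hence `Λ` is not a valid sequent. -/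
theorem countermodel_extraction (n : ℕ) (R : RAtoms 1) (Γ : LFmls 1)
    (hforest : Forestlike R) (hstable : Stable n R Γ)
    (hne : (SeqLabels R Γ).Nonempty) :
    Finite {x : ℕ // x ∈ SeqLabels R Γ} ∧
    ∃ M : ModelOn n 1 {x : ℕ // x ∈ SeqLabels R Γ},
      M.rel = (fun _ u v => Reach R 0 u.1 v.1) ∧
      M.val = (fun p => {u : {x : ℕ // x ∈ SeqLabels R Γ} | (u.1, Fml.neg p) ∈ Γ}) ∧
      (∀ e ∈ Γ, ∀ hx : e.1 ∈ SeqLabels R Γ, ¬ Sat M ⟨e.1, hx⟩ e.2) ∧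
      ¬ SeqValid n 1 R Γ :=
  countermodel_extraction_general n R Γ hstable hne

end Stit
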